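/- Let H be a finite group, A a faithful irreducible H-module, and G = A ⋊ H. For any elements a_1,...,a_d ∈ A spanning A over End_H(A) (d = dim_{End_H(A)} A), the subgroups H, H^{a_1}, ..., H^{a_d} of G satisfy H ∩ H^{a_1} ∩ ... ∩ H^{a_d} = C_H(a_1) ∩ ... ∩ C_H(a_d) = 1. -/

import Mathlib

/-!
In `A ⋊ H`, conjugating `h ∈ H` back by `a` changes only its `A`-component, by `h • a - a`; so
`H ∩ H^a = C_H(a)`. If `h` fixes every `aᵢ`, it fixes every `f (aᵢ)` with `f ∈ End_H(A)`, hence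
all of `A = ∑ End_H(A) aᵢ`, and faithfulness forces `h = 1`.
-/

namespace Stmt12

/-- The action of `H` on `A` by additive automorphisms, packaged as a homomorphism
`H →* MulAut (Multiplicative A)`, used to form the semidirect product `A ⋊ H`. -/
def mulAutOfSMul (H A : Type*) [Group H] [AddCommGroup A] [DistribMulAction H A] :
    H →* MulAut (Multiplicative A) where
  toFun h :=
    { toFun := fun a => Multiplicative.ofAdd (h • a.toAdd)
      invFun := fun a => Multiplicative.ofAdd (h⁻¹ • a.toAdd)
      left_inv := fun a => by simp
      right_inv := fun a => by simp
      map_mul' := fun a b => by simp [smul_add, ofAdd_add] }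
  map_one' := by ext a; simp
  map_mul' g h := by ext a; simp [mul_smul]

@[simp]
theorem mulAutOfSMul_apply_ofAdd {H A : Type*} [Group H] [AddCommGroup A]
    [DistribMulAction H A] (h : H) (a : A) :
    mulAutOfSMul H A h (Multiplicative.ofAdd a) = Multiplicative.ofAdd (h • a) :=
  rfl

open SemidirectProduct in
theorem inr_mem_map_conj_inl_inv_iff {N G : Type*} [Group N] [Group G]
    {φ : G →* MulAut N} (n : N) (g : G) :
    inr g ∈ (inr.range : Subgroup (N ⋊[φ] G)).map (MulAut.conj (inl n)⁻¹).toMonoidHom ↔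
      φ g n = n := by
  constructor
  · rintro ⟨_, ⟨g', rfl⟩, hconj⟩
    obtain ⟨hleft, hright⟩ := SemidirectProduct.ext_iff.mp hconj
    simp only [MulEquiv.coe_toMonoidHom, MulAut.conj_inv_apply, mul_left, mul_right, inv_left,
      inv_right, left_inl, right_inl, left_inr, right_inr, map_inv, map_one, inv_one, one_mul,
      mul_one] at hleft hright
    rw [hright] at hleft
    exact (inv_mul_eq_one.mp hleft).symm
  · intro hfix
    refine ⟨inr g, ⟨g, rfl⟩, SemidirectProduct.ext ?_ ?_⟩ <;> simp [hfix]

theorem eq_one_of_smul_eq_of_forall_eq_sum {H A : Type*} [Monoid H] [AddCommMonoid A]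
    [DistribMulAction H A] [FaithfulSMul H A] {ι : Type*} [Fintype ι] {v : ι → A}
    (hspan : ∀ x : A, ∃ f : ι → (A →+ A),
      (∀ i, ∀ h : H, ∀ a : A, f i (h • a) = h • f i a) ∧ x = ∑ i, f i (v i))
    {h : H} (hv : ∀ i, h • v i = v i) : h = 1 := by
  refine eq_of_smul_eq_smul (α := A) fun x => ?_
  obtain ⟨f, hf, rfl⟩ := hspan x
  simp only [one_smul, Finset.smul_sum, ← hf, hv]

theorem inf_conjugates_eq_bot_general
    (H A : Type*) [Group H] [AddCommGroup A]
    [DistribMulAction H A] [FaithfulSMul H A]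
    (d : ℕ) (v : Fin d → A)
    (hspan : ∀ x : A, ∃ f : Fin d → (A →+ A),
      (∀ i, ∀ h : H, ∀ a : A, f i (h • a) = h • f i a) ∧ x = ∑ i, f i (v i)) :
    ((SemidirectProduct.inr.range : Subgroup (Multiplicative A ⋊[mulAutOfSMul H A] H)) ⊓
        ⨅ i : Fin d,
          (SemidirectProduct.inr.range :
              Subgroup (Multiplicative A ⋊[mulAutOfSMul H A] H)).map
            (MulAut.conj (SemidirectProduct.inl (Multiplicative.ofAdd (v i)))⁻¹).toMonoidHom
      = ⊥) ∧
    ∀ h : H, (∀ i : Fin d, h • v i = v i) → h = 1 := by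
  have centralizer_trivial : ∀ h : H, (∀ i, h • v i = v i) → h = 1 :=
    fun _ => eq_one_of_smul_eq_of_forall_eq_sum hspan
  refine ⟨eq_bot_iff.mpr ?_, centralizer_trivial⟩
  rintro _ ⟨⟨h, rfl⟩, hconj⟩
  have hfix : ∀ i, h • v i = v i := fun i => by
    simpa using
      (inr_mem_map_conj_inl_inv_iff _ h).mp (Subgroup.mem_iInf.mp hconj i)
  simp [centralizer_trivial h hfix]

/-- Let `H` be a finite group, `A` a finite faithful irreducible
`H`-module, `G = A ⋊ H`, and `a₁, …, a_d ∈ A` a family spanning `A` over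
`End_H(A)`.  Then `H ∩ H^{a₁} ∩ ⋯ ∩ H^{a_d} = C_H(a₁) ∩ ⋯ ∩ C_H(a_d) = 1`. -/
theorem inf_conjugates_eq_bot
    (H A : Type*) [Group H] [Finite H] [AddCommGroup A] [Finite A] [Nontrivial A]
    [DistribMulAction H A] [FaithfulSMul H A]
    (hirr : ∀ W : AddSubgroup A, (∀ h : H, ∀ a ∈ W, h • a ∈ W) → W = ⊥ ∨ W = ⊤)
    (d : ℕ) (v : Fin d → A)
    (hspan : ∀ x : A, ∃ f : Fin d → (A →+ A),
      (∀ i, ∀ h : H, ∀ a : A, f i (h • a) = h • f i a) ∧ x = ∑ i, f i (v i)) :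
    ((SemidirectProduct.inr.range : Subgroup (Multiplicative A ⋊[mulAutOfSMul H A] H)) ⊓
        ⨅ i : Fin d,
          (SemidirectProduct.inr.range :
              Subgroup (Multiplicative A ⋊[mulAutOfSMul H A] H)).map
            (MulAut.conj (SemidirectProduct.inl (Multiplicative.ofAdd (v i)))⁻¹).toMonoidHom
      = ⊥) ∧
    ∀ h : H, (∀ i : Fin d, h • v i = v i) → h = 1 :=
  inf_conjugates_eq_bot_general H A d v hspan

end Stmt12
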